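/- arXiv:2603.05563 — 2 statements merged into one kernel-verified Lean document; each statement's English description precedes it below -/
import Mathlib

section
/- Let γ ≥ 0 and η ≥ 0 with γ > 0 or η > 0, let Δ ∈ ℝ with Δ ≠ 0, and let T, T' be positive natural numbers with T < T'. Then T' · φ_{γ,η}(Δ/T') < T · φ_{γ,η}(Δ/T); that is, spreading a fixed total expenditure adjustment Δ over more periods strictly reduces the total adjustment cost, so optimal reform implies gradual adjustment. -/
/-- The adjustment-cost function φ_{γ,η}(z) = (γ/2)·z² + (η/3)·|z|³. -/
noncomputable def phi (γ η : ℝ) (z : ℝ) : ℝ := γ / 2 * z ^ 2 + η / 3 * |z| ^ 3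

theorem gradualism_strictly_cheaper (γ η : ℝ) (hγ : 0 ≤ γ) (hη : 0 ≤ η)
    (hpos : 0 < γ ∨ 0 < η) (Δ : ℝ) (hΔ : Δ ≠ 0)
    (T T' : ℕ) (hT : 0 < T) (hT' : 0 < T') (hTT' : T < T') :
    (T' : ℝ) * phi γ η (Δ / T') < (T : ℝ) * phi γ η (Δ / T) := by
  have ha : (0:ℝ) < T := by exact_mod_cast hT
  have hb : (0:ℝ) < T' := by exact_mod_cast hT'
  have hab : (T:ℝ) < T' := by exact_mod_cast hTT'
  have key : ∀ t : ℝ, 0 < t →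
      t * phi γ η (Δ / t) = γ / 2 * Δ ^ 2 / t + η / 3 * |Δ| ^ 3 / t ^ 2 := by
    intro t ht
    have h1 : |Δ / t| = |Δ| / t := by
      rw [abs_div, abs_of_pos ht]
    rw [phi, h1]
    field_simp
  rw [key _ ha, key _ hb]
  have hΔ2 : 0 < Δ ^ 2 := by positivity
  have hΔ3 : 0 < |Δ| ^ 3 := by positivity
  have h1 : γ / 2 * Δ ^ 2 / T' ≤ γ / 2 * Δ ^ 2 / T := by
    apply div_le_div_of_nonneg_left (by positivity) ha (le_of_lt hab)
  have h2 : η / 3 * |Δ| ^ 3 / T' ^ 2 ≤ η / 3 * |Δ| ^ 3 / T ^ 2 := by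
    apply div_le_div_of_nonneg_left (by positivity) (by positivity)
    exact pow_le_pow_left₀ (le_of_lt ha) (le_of_lt hab) 2
  rcases hpos with hg | hn
  · have h1' : γ / 2 * Δ ^ 2 / T' < γ / 2 * Δ ^ 2 / T :=
      div_lt_div_of_pos_left (by positivity) ha hab
    linarith
  · have h2' : η / 3 * |Δ| ^ 3 / T' ^ 2 < η / 3 * |Δ| ^ 3 / T ^ 2 :=
      div_lt_div_of_pos_left (by positivity) (by positivity)
        (by exact pow_lt_pow_left₀ hab (le_of_lt ha) (by norm_num))
    linarith
end

section
/- Let n ∈ ℕ, let γ, η : Fin n → ℝ, let λ ∈ (0,1), and let x₀, x* ∈ ℝⁿ. Define the geometric transition path x_t = x* + λ^t · (x₀ − x*) for t ∈ ℕ, the adjustments Δx_t = x_t − x_{t−1} for t ≥ 1, the effective expenditures G₀ = Σ_k x₀(k) and G_t = Σ_k x_t(k) + Φ(Δx_t) for t ≥ 1, where Φ(v) = Σ_k φ_{γ(k),η(k)}(v(k)). If Σ_k x*(k) < Σ_k x₀(k) and Φ(Δx₁) > (1 − λ) · Σ_k (x₀(k) − x*(k)), then the trajectory is J-shaped: G₁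 > G₀, and there exists T such that G_t < G₀ for all t ≥ T. -/
theorem j_shaped_trajectory (n : ℕ) (γ η : Fin n → ℝ)
    (lam : ℝ) (hlam : lam ∈ Set.Ioo (0 : ℝ) 1) (x0 xstar : Fin n → ℝ)
    (x : ℕ → Fin n → ℝ) (hx : ∀ t, x t = xstar + lam ^ t • (x0 - xstar))
    (Φ : (Fin n → ℝ) → ℝ) (hΦ : ∀ v, Φ v = ∑ k, phi (γ k) (η k) (v k))
    (G : ℕ → ℝ) (hG0 : G 0 = ∑ k, x0 k)
    (hGt : ∀ t, 1 ≤ t → G t = (∑ k, x t k) + Φ (x t - x (t - 1)))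
    (hsave : ∑ k, xstar k < ∑ k, x0 k)
    (hbig : Φ (x 1 - x 0) > (1 - lam) * ∑ k, (x0 k - xstar k)) :
    G 1 > G 0 ∧ ∃ T : ℕ, ∀ t, T ≤ t → G t < G 0 := by
  obtain ⟨hl0, hl1⟩ := hlam
  set S : ℝ := ∑ k, (x0 k - xstar k) with hS
  have hSeq : S = (∑ k, x0 k) - ∑ k, xstar k := by
    rw [hS, Finset.sum_sub_distrib]
  have hSpos : 0 < S := by rw [hSeq]; linarith
  have hsum : ∀ t : ℕ, (∑ k, x t k) = (∑ k, xstar k) + lam ^ t * S := by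
    intro t
    rw [hx t]
    simp only [Pi.add_apply, Pi.smul_apply, Pi.sub_apply, smul_eq_mul]
    rw [Finset.sum_add_distrib, Finset.mul_sum]
  set h : ℝ → ℝ := fun r => ∑ k, phi (γ k) (η k) (r * (x0 k - xstar k)) with hh
  have hPhi : ∀ t : ℕ, Φ (x (t + 1) - x t) = h (lam ^ t * (lam - 1)) := by
    intro t
    rw [hΦ, hh]
    apply Finset.sum_congr rfl
    intro k _
    congr 1
    rw [hx (t + 1), hx t]
    simp only [Pi.sub_apply, Pi.add_apply, Pi.smul_apply, smul_eq_mul]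
    ring
  have hGform : ∀ t : ℕ, G (t + 1)
      = (∑ k, xstar k) + lam ^ (t + 1) * S + h (lam ^ t * (lam - 1)) := by
    intro t
    rw [hGt (t + 1) (by omega)]
    simp only [Nat.add_sub_cancel]
    rw [hsum (t + 1), hPhi t]
  -- Part 1
  have hG0' : G 0 = (∑ k, xstar k) + S := by rw [hG0]; linarith [hSeq]
  have hG1 : G 1 > G 0 := by
    have := hGt 1 (by omega)
    simp only [Nat.sub_self] at this
    rw [this, hsum 1]
    rw [hG0']
    have : Φ (x 1 - x 0) > (1 - lam) * S := hbig
    nlinarith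
  refine ⟨hG1, ?_⟩
  -- Part 2
  have hcont : Continuous h := by
    apply continuous_finset_sum
    intro k _
    unfold phi
    fun_prop
  have h0 : h 0 = 0 := by simp [hh, phi]
  have h1 : Filter.Tendsto (fun t : ℕ => lam ^ t) Filter.atTop (nhds 0) :=
    tendsto_pow_atTop_nhds_zero_of_lt_one hl0.le hl1
  have h2 : Filter.Tendsto (fun t : ℕ => h (lam ^ t * (lam - 1))) Filter.atTop (nhds 0) := by
    have harg : Filter.Tendsto (fun t : ℕ => lam ^ t * (lam - 1)) Filter.atTop (nhds 0) := by
      have := h1.mul_const (lam - 1)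
      simpa using this
    have := (hcont.tendsto 0).comp harg
    rwa [h0] at this
  have h3 : Filter.Tendsto (fun t : ℕ => lam ^ (t + 1)) Filter.atTop (nhds 0) :=
    h1.comp (Filter.tendsto_add_atTop_nat 1)
  have hGtend : Filter.Tendsto (fun t : ℕ => G (t + 1)) Filter.atTop (nhds (∑ k, xstar k)) := by
    have : Filter.Tendsto
        (fun t : ℕ => (∑ k, xstar k) + lam ^ (t + 1) * S + h (lam ^ t * (lam - 1)))
        Filter.atTop (nhds ((∑ k, xstar k) + 0 * S + 0)) :=
      (Filter.Tendsto.add (Filter.Tendsto.add tendsto_const_nhds (h3.mul_const S)) h2)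
    simp only [zero_mul, add_zero] at this
    exact this.congr (fun t => (hGform t).symm)
  have hlt : (∑ k, xstar k) < G 0 := by rw [hG0']; linarith
  have hev : ∀ᶠ t : ℕ in Filter.atTop, G (t + 1) < G 0 :=
    hGtend.eventually_lt_const hlt
  obtain ⟨T, hT⟩ := Filter.eventually_atTop.mp hev
  refine ⟨T + 1, fun t ht => ?_⟩
  obtain ⟨s, rfl⟩ : ∃ s, t = s + 1 := ⟨t - 1, by omega⟩
  exact hT s (by omega)
end
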